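/- arXiv:2203.08091 — 2 statements merged into one kernel-verified Lean document; each statement's English description precedes it below -/
import Mathlib

section
/- Let L(q) := ∑_{k=0}^∞ ( ∏_{i=1}^{k−1}(k m + 1 − i n) / k! ) · (D q / n)^k ∈ ℚ[[q]] and μ(q) := ∑_{k=1}^∞ ( D^k · ∏_{i=1}^{k−1}(k m + 1 − i n) / (k! · k · n^k) ) · q^k ∈ ℚ[[q]]. Then L(q) = 1 + q·μ′(q) and L(q)^n − D·q·L(q)^m = 1 in ℚ[[q]]. -/
/-- Formal derivative `d/dq` on `ℚ[[q]]`. -/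
noncomputable def dQ (f : PowerSeries ℚ) : PowerSeries ℚ :=
  PowerSeries.mk fun k => ((k + 1 : ℕ) : ℚ) * PowerSeries.coeff (k + 1) f

/-!
Write `A_k(x) = x/(x+kz) · binom(x+kz, k)` for the coefficients of the generalized binomial
series `B_x = ∑ A_k(x) q^k`. Rothe's convolution identity `∑_{i+j=N} A_i(x) A_j(y) = A_N(x+y)`
gives `B_x B_y = B_{x+y}`; it is proved by induction on `N`, since for fixed `x` the difference of
the two sides is a polynomial in `y` that vanishes at `0` and, by the Pascal-type recursion
`A_{k+1}(y+1) = A_{k+1}(y) + A_k(y+z)` and the induction hypothesis, is invariant under `y ↦ y+1`.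
With `z = m/n` the series `L` is `B_{1/n}(Dq)`, so `L^n = B_1(Dq)` and `L^m = B_z(Dq)`, and
`A_{k+1}(1) = A_k(z)` says `B_1 = 1 + q B_z`. The first claim is a coefficient comparison.
-/

open Finset Nat

section RotheCoeff

open Polynomial

variable {K : Type*} [Field K]

-- `A_k` of the header as a polynomial in `x`: `x/k! · (x+kz-1)(x+kz-2)⋯(x+kz-k+1)`.
noncomputable def rothePoly (z : K) : ℕ → K[X]
  | 0 => 1
  | k + 1 => C ((k + 1)! : K)⁻¹ * X * (descPochhammer K k).comp (X + C ((k + 1) * z) - 1)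

noncomputable def rotheCoeff (z x : K) (k : ℕ) : K := (rothePoly z k).eval x

@[simp]
lemma rotheCoeff_zero (z x : K) : rotheCoeff z x 0 = 1 := by
  simp [rotheCoeff, rothePoly]

lemma rotheCoeff_succ (z x : K) (k : ℕ) :
    rotheCoeff z x (k + 1) = x * (descPochhammer K k).eval (x + (k + 1) * z - 1) / (k + 1)! := by
  simp only [rotheCoeff, rothePoly, eval_mul, eval_C, eval_X, eval_comp, eval_add, eval_sub,
    eval_one]
  ring

@[simp]
lemma rotheCoeff_zero_left (z : K) (k : ℕ) : rotheCoeff z 0 (k + 1) = 0 := by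
  simp [rotheCoeff_succ]

variable [CharZero K]

lemma rotheCoeff_add_one (z x : K) : ∀ k : ℕ,
    rotheCoeff z (x + 1) (k + 1) = rotheCoeff z x (k + 1) + rotheCoeff z (x + z) k
  | 0 => by simp [rotheCoeff_succ]
  | k + 1 => by
    obtain ⟨c, hc⟩ : ∃ c, c = x + (k + 2) * z := ⟨_, rfl⟩
    have hL : (descPochhammer K (k + 1)).eval (x + 1 + (↑(k + 1) + 1) * z - 1) =
        c * (descPochhammer K k).eval (c - 1) := by
      rw [descPochhammer_succ_left, eval_mul, eval_X, eval_comp, eval_sub, eval_X, eval_one, hc]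
      push_cast; ring_nf
    have hR : (descPochhammer K (k + 1)).eval (x + (↑(k + 1) + 1) * z - 1) =
        (descPochhammer K k).eval (c - 1) * (c - 1 - k) := by
      rw [descPochhammer_succ_eval, hc]; push_cast; ring_nf
    have hz : x + z + (↑k + 1) * z - 1 = c - 1 := by rw [hc]; ring
    have hk : ((k + 2 : ℕ) : K) ≠ 0 := Nat.cast_ne_zero.mpr (by omega)
    rw [rotheCoeff_succ, rotheCoeff_succ, rotheCoeff_succ, hL, hR, hz, factorial_succ (k + 1),
      Nat.cast_mul]
    field_simp
    rw [hc]
    push_cast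
    ring

lemma rotheCoeff_one_succ (z : K) : ∀ k : ℕ, rotheCoeff z 1 (k + 1) = rotheCoeff z z k
  | 0 => by simp [rotheCoeff_succ]
  | k + 1 => by
    have h : (descPochhammer K (k + 1)).eval (1 + (↑(k + 1) + 1) * z - 1) =
        (k + 2) * z * (descPochhammer K k).eval (z + (k + 1) * z - 1) := by
      rw [descPochhammer_succ_left, eval_mul, eval_X, eval_comp, eval_sub, eval_X, eval_one]
      push_cast; ring_nf
    have hk : ((k + 2 : ℕ) : K) ≠ 0 := Nat.cast_ne_zero.mpr (by omega)
    rw [rotheCoeff_succ, rotheCoeff_succ, h, factorial_succ (k + 1), Nat.cast_mul]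
    field_simp
    push_cast
    ring

lemma Polynomial.eq_zero_of_eval_zero_of_eval_add_one {p : K[X]} (h0 : p.eval 0 = 0)
    (h : ∀ t, p.eval (t + 1) = p.eval t) : p = 0 := by
  have hnat (j : ℕ) : p.eval (j : K) = 0 := by
    induction j with
    | zero => simpa using h0
    | succ j ih => rw [Nat.cast_succ, h, ih]
  exact eq_zero_of_infinite_isRoot p (Set.infinite_of_injective_forall_mem Nat.cast_injective hnat)

theorem sum_antidiagonal_rotheCoeff_mul (z : K) (N : ℕ) : ∀ x y : K,
    ∑ p ∈ antidiagonal N, rotheCoeff z x p.1 * rotheCoeff z y p.2 = rotheCoeff z (x + y) N := by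
  induction N with
  | zero => simp
  | succ N ih =>
    intro x y
    set P : K[X] := C (rotheCoeff z x (N + 1)) +
      ∑ p ∈ antidiagonal N, C (rotheCoeff z x p.1) * rothePoly z (p.2 + 1) -
      (rothePoly z (N + 1)).comp (X + C x)
    have hP (t : K) : P.eval t = rotheCoeff z x (N + 1) +
        ∑ p ∈ antidiagonal N, rotheCoeff z x p.1 * rotheCoeff z t (p.2 + 1) -
        rotheCoeff z (x + t) (N + 1) := by
      simp [P, eval_finsetSum, rotheCoeff, add_comm]
    have hP0 : P = 0 := by
      refine eq_zero_of_eval_zero_of_eval_add_one (by simp [hP]) fun t => ?_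
      simp only [hP, rotheCoeff_add_one, mul_add, sum_add_distrib, ih, ← add_assoc]
      ring
    have := hP y
    rw [hP0, eval_zero] at this
    rw [sum_antidiagonal_succ', rotheCoeff_zero, mul_one]
    linear_combination -this

end RotheCoeff

section RotheSeries

open PowerSeries

variable {K : Type*} [Field K]

noncomputable def rotheSeries (z x : K) : K⟦X⟧ := mk (rotheCoeff z x)

@[simp]
lemma rotheSeries_zero_right (z : K) : rotheSeries z 0 = 1 := by
  ext (_ | k) <;> simp [rotheSeries, coeff_one]

variable [CharZero K]

lemma rotheSeries_one (z : K) : rotheSeries z 1 = 1 + X * rotheSeries z z := by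
  ext (_ | k) <;> simp [rotheSeries, coeff_one, rotheCoeff_one_succ]

lemma rotheSeries_mul (z x y : K) : rotheSeries z x * rotheSeries z y = rotheSeries z (x + y) := by
  ext N
  simp [rotheSeries, coeff_mul, sum_antidiagonal_rotheCoeff_mul]

lemma rotheSeries_pow (z x : K) (t : ℕ) : rotheSeries z x ^ t = rotheSeries z (t * x) := by
  induction t with
  | zero => simp
  | succ t ih => rw [pow_succ, ih, rotheSeries_mul]; push_cast; ring_nf

lemma rotheSeries_pow_sub_X_mul_pow {n : ℕ} (m : ℕ) (hn : (n : K) ≠ 0) :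
    rotheSeries (m / n : K) (1 / n) ^ n - X * rotheSeries (m / n : K) (1 / n) ^ m = 1 := by
  rw [rotheSeries_pow, rotheSeries_pow, mul_one_div_cancel hn, mul_one_div, rotheSeries_one,
    add_sub_cancel_right]

lemma mk_eq_rescale_rotheSeries (a b c : K) (hc : c ≠ 0) :
    (mk fun k => (∏ i ∈ range (k - 1), ((k : K) * a + 1 - ((i : K) + 1) * c)) /
        (k ! : K) * (b / c) ^ k) = rescale b (rotheSeries (a / c) (1 / c)) := by
  ext (_ | k)
  · simp [rotheSeries]
  · have hfactor (i : ℕ) : 1 / c + (k + 1) * (a / c) - 1 - i =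
        ((↑(k + 1) : K) * a + 1 - ((i : K) + 1) * c) / c := by
      push_cast; field_simp; ring
    simp only [coeff_mk, coeff_rescale, rotheSeries, rotheCoeff_succ,
      descPochhammer_eval_eq_prod_range, hfactor, prod_div_distrib, prod_const, card_range,
      add_tsub_cancel_right]
    ring

end RotheSeries

open PowerSeries in
lemma one_add_X_mul_dQ_mk_div (f : ℕ → ℚ) (h0 : f 0 = 1) :
    1 + X * dQ (PowerSeries.mk fun k => if k = 0 then 0 else f k / k) = PowerSeries.mk f := by
  ext (_ | k)
  · simp [dQ, h0]
  · have hk : ((k + 1 : ℕ) : ℚ) ≠ 0 := Nat.cast_ne_zero.mpr k.succ_ne_zero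
    simpa [dQ, coeff_one] using mul_div_cancel₀ (f (k + 1)) hk

theorem stmt0_general (n : ℕ)
    (m D : ℕ)
    (hmn : m < n)
    (L μ : PowerSeries ℚ)
    (hL : L = PowerSeries.mk fun k =>
      (∏ i ∈ Finset.range (k - 1), ((k : ℚ) * (m : ℚ) + 1 - ((i : ℚ) + 1) * (n : ℚ))) /
          (Nat.factorial k : ℚ) * ((D : ℚ) / (n : ℚ)) ^ k)
    (hμ : μ = PowerSeries.mk fun k => if k = 0 then 0 else
      (D : ℚ) ^ k *
        (∏ i ∈ Finset.range (k - 1), ((k : ℚ) * (m : ℚ) + 1 - ((i : ℚ) + 1) * (n : ℚ))) /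
        ((Nat.factorial k : ℚ) * (k : ℚ) * (n : ℚ) ^ k)) :
    L = 1 + PowerSeries.X * dQ μ ∧
      L ^ n - (D : PowerSeries ℚ) * PowerSeries.X * L ^ m = 1 := by
  have hn : (n : ℚ) ≠ 0 := Nat.cast_ne_zero.mpr (by omega)
  constructor
  · rw [hμ, hL, ← one_add_X_mul_dQ_mk_div _ (by simp)]
    congr 3
    ext k
    rw [PowerSeries.coeff_mk, PowerSeries.coeff_mk]
    split_ifs <;> ring
  · have hDX : (D : PowerSeries ℚ) * PowerSeries.X =
        PowerSeries.rescale (D : ℚ) PowerSeries.X := by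
      rw [PowerSeries.rescale_X, map_natCast]
    rw [hL, mk_eq_rescale_rotheSeries _ _ _ hn, hDX, ← map_pow, ← map_pow, ← map_mul,
      ← map_sub, rotheSeries_pow_sub_X_mul_pow m hn, map_one]

theorem stmt0 (n r : ℕ) (hr : 1 ≤ r) (d : Fin r → ℕ) (hd : ∀ k, 2 ≤ d k)
    (m D : ℕ) (hm : m = ∑ k, d k) (hD : D = ∏ k, d k ^ d k)
    (hmn : m < n)
    (L μ : PowerSeries ℚ)
    (hL : L = PowerSeries.mk fun k =>
      (∏ i ∈ Finset.range (k - 1), ((k : ℚ) * (m : ℚ) + 1 - ((i : ℚ) + 1) * (n : ℚ))) /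
          (Nat.factorial k : ℚ) * ((D : ℚ) / (n : ℚ)) ^ k)
    (hμ : μ = PowerSeries.mk fun k => if k = 0 then 0 else
      (D : ℚ) ^ k *
        (∏ i ∈ Finset.range (k - 1), ((k : ℚ) * (m : ℚ) + 1 - ((i : ℚ) + 1) * (n : ℚ))) /
        ((Nat.factorial k : ℚ) * (k : ℚ) * (n : ℚ) ^ k)) :
    L = 1 + PowerSeries.X * dQ μ ∧
      L ^ n - (D : PowerSeries ℚ) * PowerSeries.X * L ^ m = 1 :=
  stmt0_general n m D hmn L μ hL hμ
end

section
/- For every integer p ≥ 0 and every β ≥ 0, the coefficient of q^β in 𝔉_p(w,q) lies in ℚ[[w]]; that is, all coefficients of negative powers of w in 𝔉_p(w,q) vanish. -/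
/-!
On the `q^β`-coefficient, `𝐃` acts as multiplication by `w⁻¹ (w + β)`, and the `q^β`-coefficient
of `𝔉` is `w^{νβ} f_β(w)` with `f_β ∈ ℚ[[w]]`. Hence the `q^β`-coefficient of `𝔉_p` is
`w^{νβ - p} ∑_{β₁ ≤ β} ∑_l c̃_{p,l}^{(β₁)} (w + β - β₁)^l f_{β-β₁}(w)`, whose `w^t`-coefficient is
`∑_{β₁ ≤ β} ∑_l c̃_{p,l}^{(β₁)} c_{l,t}^{(β-β₁)}`. The term `β₁ = β` is `c̃_{p,t}^{(β)}`, so for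
`t < p - νβ` the recursion defining `c̃` says precisely that this sum vanishes.
-/

/-- The Laurent-series variable `w`. -/
noncomputable def Zl : LaurentSeries ℚ := HahnSeries.single (1 : ℤ) (1 : ℚ)

/-- The coefficients `c_{p,l}^{(β)}`. -/
noncomputable def ccoef (n r : ℕ) (d : Fin r → ℕ) (p β : ℕ) (l : ℤ) : ℚ :=
  if l < 0 then 0 else
    PowerSeries.coeff (R := ℚ) l.toNat
      (((PowerSeries.X + (β : PowerSeries ℚ)) ^ p *
          ∏ k : Fin r, ∏ i ∈ Finset.range (d k * β),
            ((d k : PowerSeries ℚ) * PowerSeries.X + ((i + 1 : ℕ) : PowerSeries ℚ))) *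
        (∏ j ∈ Finset.range β, (PowerSeries.X + ((j + 1 : ℕ) : PowerSeries ℚ)) ^ n)⁻¹)

/-- The operator `𝐃 = 1 + (q/w)·d/dq` on q-series with Laurent-series coefficients. -/
noncomputable def Dop (H : PowerSeries (LaurentSeries ℚ)) : PowerSeries (LaurentSeries ℚ) :=
  PowerSeries.mk fun β =>
    (1 + HahnSeries.single (-1 : ℤ) ((β : ℕ) : ℚ)) * PowerSeries.coeff (R := LaurentSeries ℚ) β H

open PowerSeries LaurentSeries

/-- `f_β`: the `q^β`-coefficient of `𝔉` is `w^{νβ} f_β(w)`. -/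
noncomputable def fTerm (n r : ℕ) (d : Fin r → ℕ) (β : ℕ) : ℚ⟦X⟧ :=
  (∏ k : Fin r, ∏ i ∈ Finset.range (d k * β), ((d k : ℚ⟦X⟧) * X + ((i + 1 : ℕ) : ℚ⟦X⟧))) *
    (∏ j ∈ Finset.range β, (X + ((j + 1 : ℕ) : ℚ⟦X⟧)) ^ n)⁻¹

section Coefficients

variable (n r : ℕ) (d : Fin r → ℕ)

lemma ccoef_eq_coeff_coe (q β : ℕ) (t : ℤ) :
    ccoef n r d q β t = (((X + (β : ℚ⟦X⟧)) ^ q * fTerm n r d β : ℚ⟦X⟧) : ℚ⸨X⸩).coeff t := by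
  rw [ccoef, PowerSeries.coeff_coe, fTerm, mul_assoc]
  split_ifs with ht
  · rfl
  · congr 2
    omega

lemma ccoef_zero_right (q : ℕ) (t : ℤ) : ccoef n r d q 0 t = if t = q then 1 else 0 := by
  simp [ccoef_eq_coeff_coe, fTerm, HahnSeries.coeff_single]

lemma coe_fTerm (β : ℕ) :
    (∏ k : Fin r, ∏ i ∈ Finset.range (d k * β), ((d k : ℚ⸨X⸩) * Zl + ((i + 1 : ℕ) : ℚ⸨X⸩))) /
        ∏ j ∈ Finset.range β, (Zl + ((j + 1 : ℕ) : ℚ⸨X⸩)) ^ n = (fTerm n r d β : ℚ⸨X⸩) := by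
  set Q : ℚ⟦X⟧ := ∏ j ∈ Finset.range β, (X + ((j + 1 : ℕ) : ℚ⟦X⟧)) ^ n
  have hQ : constantCoeff Q ≠ 0 := by
    simp only [Q, map_prod, map_pow, map_add, constantCoeff_X, map_natCast, zero_add]
    exact Finset.prod_ne_zero_iff.2 fun j _ => pow_ne_zero _ (Nat.cast_ne_zero.2 j.succ_ne_zero)
  have hinv : ((Q⁻¹ : ℚ⟦X⟧) : ℚ⸨X⸩) = (Q : ℚ⸨X⸩)⁻¹ :=
    eq_inv_of_mul_eq_one_right (by rw [← map_mul, PowerSeries.mul_inv_cancel _ hQ, map_one])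
  rw [fTerm, map_mul, hinv, div_eq_mul_inv]
  simp only [Q, map_prod, map_pow, map_add, map_mul, map_natCast, coe_X]
  rfl

end Coefficients

lemma Zl_pow (a : ℕ) : Zl ^ a = HahnSeries.single (a : ℤ) 1 := by
  rw [Zl, HahnSeries.single_pow, one_pow, nsmul_eq_mul, mul_one]

lemma coeff_Dop_iterate (H : ℚ⸨X⸩⟦X⟧) (l β : ℕ) :
    coeff β (Dop^[l] H) = (1 + HahnSeries.single (-1 : ℤ) (β : ℚ)) ^ l * coeff β H := by
  induction l generalizing H with
  | zero => simp
  | succ l ih => rw [Function.iterate_succ_apply, ih, Dop, coeff_mk, pow_succ, mul_assoc]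

lemma one_add_single_neg_one_pow (c l : ℕ) :
    (1 + HahnSeries.single (-1 : ℤ) (c : ℚ)) ^ l =
      HahnSeries.single (-(l : ℤ)) 1 * (((X + (c : ℚ⟦X⟧)) ^ l : ℚ⟦X⟧) : ℚ⸨X⸩) := by
  have h : 1 + HahnSeries.single (-1 : ℤ) (c : ℚ) =
      HahnSeries.single (-1 : ℤ) 1 * (((X + (c : ℚ⟦X⟧)) : ℚ⟦X⟧) : ℚ⸨X⸩) := by
    rw [map_add, coe_X, map_natCast (HahnSeries.ofPowerSeries ℤ ℚ),
      ← map_natCast (HahnSeries.C (Γ := ℤ) (R := ℚ)), HahnSeries.C_apply, mul_add,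
      HahnSeries.single_mul_single, HahnSeries.single_mul_single]
    norm_num [HahnSeries.single_zero_one, add_comm]
  rw [h, mul_pow, map_pow, HahnSeries.single_pow, one_pow, nsmul_eq_mul, mul_neg_one]

lemma coeff_coeff_monomial_mul_Dop_iterate {n r ν : ℕ} {d : Fin r → ℕ} {H : ℚ⸨X⸩⟦X⟧}
    (hH : ∀ γ : ℕ, coeff γ H = HahnSeries.single ((ν * γ : ℕ) : ℤ) 1 * (fTerm n r d γ : ℚ⸨X⸩))
    (e j : ℤ) (c : ℚ) (l β₁ β : ℕ) :
    (coeff β (C (HahnSeries.single e c) * X ^ β₁ * Dop^[l] H)).coeff j =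
      if β₁ ≤ β then c * ccoef n r d l (β - β₁) (j - e + l - (ν * (β - β₁) : ℕ)) else 0 := by
  rw [mul_assoc, coeff_C_mul, coeff_X_pow_mul']
  split_ifs with hb
  · rw [coeff_Dop_iterate, hH, one_add_single_neg_one_pow, ccoef_eq_coeff_coe, map_mul]
    set m : ℤ := ((ν * (β - β₁) : ℕ) : ℤ)
    set A : ℚ⸨X⸩ := (((X + ((β - β₁ : ℕ) : ℚ⟦X⟧)) ^ l : ℚ⟦X⟧) : ℚ⸨X⸩)
    set B : ℚ⸨X⸩ := (fTerm n r d (β - β₁) : ℚ⸨X⸩)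
    have hprod : HahnSeries.single e c * (HahnSeries.single (-(l : ℤ)) 1 * A *
        (HahnSeries.single m 1 * B)) = HahnSeries.single (e - l + m) c * (A * B) := by
      rw [show HahnSeries.single e c * (HahnSeries.single (-(l : ℤ)) 1 * A *
          (HahnSeries.single m 1 * B)) = HahnSeries.single e c * HahnSeries.single (-(l : ℤ)) 1 *
            HahnSeries.single m (1 : ℚ) * (A * B) by ring,
        HahnSeries.single_mul_single, HahnSeries.single_mul_single, mul_one, mul_one, ← sub_eq_add_neg]
    rw [hprod, show j = j - e + l - m + (e - l + m) by ring, HahnSeries.coeff_single_mul_add,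
      show j - e + l - m + (e - l + m) - e + l - m = j - e + l - m by ring]
  · rw [mul_zero, HahnSeries.coeff_zero]

lemma sum_Icc_zero_natCast {M : Type*} [AddCommMonoid M] (a : ℕ) (f : ℤ → M) :
    ∑ k ∈ Finset.Icc (0 : ℤ) a, f k = ∑ l ∈ Finset.range (a + 1), f l := by
  trans ∑ k ∈ (Finset.range (a + 1)).map Nat.castEmbedding, f k
  swap
  · rw [Finset.sum_map]
    rfl
  congr 1
  ext k
  simp only [Finset.mem_Icc, Finset.mem_map, Finset.mem_range, Nat.castEmbedding_apply]
  constructor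
  · rintro ⟨h0, ha⟩
    exact ⟨k.toNat, by omega, by omega⟩
  · rintro ⟨l, hl, rfl⟩
    omega

section Recursion

variable {n r ν : ℕ} {d : Fin r → ℕ} {ct : ℕ → ℤ → ℕ → ℚ}

lemma sum_ct_mul_ccoef_eq_zero
    (hct0 : ∀ (p : ℕ) (l : ℤ), ct p l 0 = if l = (p : ℤ) then 1 else 0)
    (hctrec : ∀ (p : ℕ) (l : ℤ) (β : ℕ), 1 ≤ β → 0 ≤ l → l ≤ (p : ℤ) - (ν : ℤ) * (β : ℤ) →
      ct p l β = -∑ β₁ ∈ Finset.range β, ∑ k ∈ Finset.Icc (0 : ℤ) ((p : ℤ) - (ν : ℤ) * (β₁ : ℤ)),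
        ct p k β₁ * ccoef n r d k.toNat (β - β₁) l)
    {p β : ℕ} {t : ℤ} (ht0 : 0 ≤ t) (ht : t < p - ν * β) :
    ∑ β₁ ∈ Finset.range (β + 1), ∑ l ∈ Finset.range (p - ν * β₁ + 1),
      ct p l β₁ * ccoef n r d l (β - β₁) t = 0 := by
  have hlast : ∑ l ∈ Finset.range (p - ν * β + 1), ct p l β * ccoef n r d l (β - β) t =
      ct p t β := by
    rw [Finset.sum_eq_single_of_mem t.toNat (Finset.mem_range.2 (by omega))]
    · rw [Nat.sub_self, ccoef_zero_right, if_pos (by omega), mul_one, Int.toNat_of_nonneg ht0]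
    · intro l _ hl
      rw [Nat.sub_self, ccoef_zero_right, if_neg (by omega), mul_zero]
  have hrest : ∀ β₁ ∈ Finset.range β,
      ∑ l ∈ Finset.range (p - ν * β₁ + 1), ct p l β₁ * ccoef n r d l (β - β₁) t =
        ∑ k ∈ Finset.Icc (0 : ℤ) (p - ν * β₁), ct p k β₁ * ccoef n r d k.toNat (β - β₁) t := by
    intro β₁ hβ₁
    have hle : ν * β₁ ≤ ν * β := Nat.mul_le_mul_left ν (Finset.mem_range.1 hβ₁).le
    have hcast : ((p - ν * β₁ : ℕ) : ℤ) = p - ν * β₁ := by omega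
    simp only [← hcast, sum_Icc_zero_natCast, Int.toNat_natCast]
  rw [Finset.sum_range_succ, hlast, Finset.sum_congr rfl hrest]
  rcases Nat.eq_zero_or_pos β with rfl | hβ
  · rw [hct0, if_neg (by omega), Finset.sum_range_zero, zero_add]
  · rw [hctrec p t β hβ ht0 ht.le, add_neg_cancel]

lemma sum_ite_ct_mul_ccoef_eq_zero (hν : 1 ≤ ν)
    (hct0 : ∀ (p : ℕ) (l : ℤ), ct p l 0 = if l = (p : ℤ) then 1 else 0)
    (hctrec : ∀ (p : ℕ) (l : ℤ) (β : ℕ), 1 ≤ β → 0 ≤ l → l ≤ (p : ℤ) - (ν : ℤ) * (β : ℤ) →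
      ct p l β = -∑ β₁ ∈ Finset.range β, ∑ k ∈ Finset.Icc (0 : ℤ) ((p : ℤ) - (ν : ℤ) * (β₁ : ℤ)),
        ct p k β₁ * ccoef n r d k.toNat (β - β₁) l)
    {p β : ℕ} {t : ℤ} (ht : t < p - ν * β) :
    ∑ β₁ ∈ Finset.range (p / ν + 1), ∑ l ∈ Finset.range (p - ν * β₁ + 1),
      (if β₁ ≤ β then ct p l β₁ * ccoef n r d l (β - β₁) t else 0) = 0 := by
  rcases lt_or_ge t 0 with ht0 | ht0
  · simp [ccoef, ht0]
  have hβ : β ≤ p / ν := (Nat.le_div_iff_mul_le hν).2 (by rw [mul_comm]; omega)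
  rw [← Finset.sum_subset (Finset.range_subset_range.2 (Nat.succ_le_succ hβ))
    fun β₁ _ hβ₁ => Finset.sum_eq_zero fun l _ => if_neg (by rw [Finset.mem_range] at hβ₁; omega)]
  rw [← sum_ct_mul_ccoef_eq_zero hct0 hctrec ht0 ht]
  exact Finset.sum_congr rfl fun β₁ hβ₁ =>
    Finset.sum_congr rfl fun l _ => if_pos (Nat.lt_succ_iff.1 (Finset.mem_range.1 hβ₁))

end Recursion

theorem stmt8_general (n r : ℕ) (d : Fin r → ℕ)
    (m : ℕ)
    (ν : ℕ) (hν : ν = n - m) (hmn : m < n)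
    -- the coefficients c̃_{p,l}^{(β)}
    (ct : ℕ → ℤ → ℕ → ℚ)
    (hct0 : ∀ (p : ℕ) (l : ℤ), ct p l 0 = if l = (p : ℤ) then 1 else 0)
    (hctrec : ∀ (p : ℕ) (l : ℤ) (β : ℕ), 1 ≤ β → 0 ≤ l → l ≤ (p : ℤ) - (ν : ℤ) * (β : ℤ) →
      ct p l β = -∑ β₁ ∈ Finset.range β, ∑ k ∈ Finset.Icc (0 : ℤ) ((p : ℤ) - (ν : ℤ) * (β₁ : ℤ)),
        ct p k β₁ * ccoef n r d k.toNat (β - β₁) l)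
    -- the series 𝔉(w,q)
    (F : PowerSeries (LaurentSeries ℚ))
    (hF : ∀ β : ℕ, PowerSeries.coeff (R := LaurentSeries ℚ) β F =
      Zl ^ (ν * β) *
        (∏ k : Fin r, ∏ i ∈ Finset.range (d k * β),
          ((d k : LaurentSeries ℚ) * Zl + ((i + 1 : ℕ) : LaurentSeries ℚ))) /
        ∏ j ∈ Finset.range β, (Zl + ((j + 1 : ℕ) : LaurentSeries ℚ)) ^ n)
    -- the series 𝔉_p(w,q)
    (Fp : ℕ → PowerSeries (LaurentSeries ℚ))
    (hFp : ∀ p : ℕ, Fp p =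
      ∑ β ∈ Finset.range (p / ν + 1), ∑ l ∈ Finset.range (p - ν * β + 1),
        PowerSeries.C (R := LaurentSeries ℚ)
            (HahnSeries.single (-((p : ℤ) - (ν : ℤ) * (β : ℤ) - (l : ℤ))) (ct p (l : ℤ) β)) *
          PowerSeries.X ^ β * Dop^[l] F) :
    -- the q-coefficients of 𝔉_p have no negative powers of w
    ∀ (p β : ℕ) (j : ℤ), j < 0 → (PowerSeries.coeff (R := LaurentSeries ℚ) β (Fp p)).coeff j = 0 := by
  intro p β j hj
  have hH (γ : ℕ) : coeff γ F = HahnSeries.single ((ν * γ : ℕ) : ℤ) 1 * (fTerm n r d γ : ℚ⸨X⸩) := by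
    rw [hF, mul_div_assoc, coe_fTerm, Zl_pow]
  rw [hFp, map_sum, HahnSeries.coeff_sum]
  refine (Finset.sum_congr rfl fun β₁ _ => ?_).trans
    (sum_ite_ct_mul_ccoef_eq_zero (by omega) hct0 hctrec (β := β) (t := j + p - ν * β) (by omega))
  rw [map_sum, HahnSeries.coeff_sum]
  refine Finset.sum_congr rfl fun l _ => ?_
  rw [coeff_coeff_monomial_mul_Dop_iterate hH]
  split_ifs with hb
  · congr 2
    push_cast [hb]
    ring
  · rfl

theorem stmt8 (n r : ℕ) (hr : 1 ≤ r) (d : Fin r → ℕ) (hd : ∀ k, 2 ≤ d k)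
    (m D : ℕ) (hm : m = ∑ k, d k) (hD : D = ∏ k, d k ^ d k)
    (ν : ℕ) (hν : ν = n - m) (hmn : m < n)
    -- the coefficients c̃_{p,l}^{(β)}
    (ct : ℕ → ℤ → ℕ → ℚ)
    (hct0 : ∀ (p : ℕ) (l : ℤ), ct p l 0 = if l = (p : ℤ) then 1 else 0)
    (hctz : ∀ (p : ℕ) (l : ℤ) (β : ℕ),
      (l < 0 ∨ (p : ℤ) - (ν : ℤ) * (β : ℤ) < l) → ct p l β = 0)
    (hctrec : ∀ (p : ℕ) (l : ℤ) (β : ℕ), 1 ≤ β → 0 ≤ l → l ≤ (p : ℤ) - (ν : ℤ) * (β : ℤ) →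
      ct p l β = -∑ β₁ ∈ Finset.range β, ∑ k ∈ Finset.Icc (0 : ℤ) ((p : ℤ) - (ν : ℤ) * (β₁ : ℤ)),
        ct p k β₁ * ccoef n r d k.toNat (β - β₁) l)
    -- the series 𝔉(w,q)
    (F : PowerSeries (LaurentSeries ℚ))
    (hF : ∀ β : ℕ, PowerSeries.coeff (R := LaurentSeries ℚ) β F =
      Zl ^ (ν * β) *
        (∏ k : Fin r, ∏ i ∈ Finset.range (d k * β),
          ((d k : LaurentSeries ℚ) * Zl + ((i + 1 : ℕ) : LaurentSeries ℚ))) /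
        ∏ j ∈ Finset.range β, (Zl + ((j + 1 : ℕ) : LaurentSeries ℚ)) ^ n)
    -- the series 𝔉_p(w,q)
    (Fp : ℕ → PowerSeries (LaurentSeries ℚ))
    (hFp : ∀ p : ℕ, Fp p =
      ∑ β ∈ Finset.range (p / ν + 1), ∑ l ∈ Finset.range (p - ν * β + 1),
        PowerSeries.C (R := LaurentSeries ℚ)
            (HahnSeries.single (-((p : ℤ) - (ν : ℤ) * (β : ℤ) - (l : ℤ))) (ct p (l : ℤ) β)) *
          PowerSeries.X ^ β * Dop^[l] F) :
    -- the q-coefficients of 𝔉_p have no negative powers of w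
    ∀ (p β : ℕ) (j : ℤ), j < 0 → (PowerSeries.coeff (R := LaurentSeries ℚ) β (Fp p)).coeff j = 0 :=
  stmt8_general n r d m ν hν hmn ct hct0 hctrec F hF Fp hFp
end
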